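/- arXiv:1205.1586 — 6 statements merged into one kernel-verified Lean document; each statement's English description precedes it below -/
import Mathlib

section
/- If a polynomial p ∈ ℚ[x,y] satisfies p ∘ γ = p for every γ ∈ SL₂(ℤ), then p ∘ g = p for every g ∈ SL₂(ℚ). (Zariski density of SL₂(ℤ) in SL₂: invariance under the integral points implies invariance under all rational points.) -/
/-- The entries of an element of `SL₂(ℤ)`, mapped into `ℚ`. -/
noncomputable def matQ (γ : Matrix.SpecialLinearGroup (Fin 2) ℤ) :
    Matrix (Fin 2) (Fin 2) ℚ :=
  (γ : Matrix (Fin 2) (Fin 2) ℤ).map (Int.cast : ℤ → ℚ)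

/-- `p ∘ g` : the polynomial obtained from `p ∈ ℚ[x,y]` by the substitution
`x ↦ g₀₀·x + g₀₁·y`, `y ↦ g₁₀·x + g₁₁·y`. -/
noncomputable def polyComp (p : MvPolynomial (Fin 2) ℚ) (g : Matrix (Fin 2) (Fin 2) ℚ) :
    MvPolynomial (Fin 2) ℚ :=
  MvPolynomial.aeval
    (fun i => MvPolynomial.C (g i 0) * MvPolynomial.X 0
      + MvPolynomial.C (g i 1) * MvPolynomial.X 1) p

/-!
For rational matrices `A`, `B`, the difference `p ∘ (A + t • B) - p` is a polynomial in `t` with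
coefficients in `ℚ[x,y]`. For a transvection `1 + t • E_ij` it vanishes at every integer `t`,
because integral transvections lie in `SL₂(ℤ)`; so it vanishes identically and `p` is fixed by
every rational transvection. Since `p ∘ (g * h) = (p ∘ g) ∘ h` and the transvections generate
`SL₂(ℚ)`, `p` is fixed by all of `SL₂(ℚ)`.
-/

open MvPolynomial

theorem Polynomial.eq_zero_of_forall_eval_intCast_eq_zero {R : Type*} [CommRing R] [IsDomain R]
    [CharZero R] {P : Polynomial R} (h : ∀ n : ℤ, P.eval (n : R) = 0) : P = 0 :=
  P.eq_zero_of_infinite_isRoot (Set.infinite_of_injective_forall_mem Int.cast_injective h)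

lemma polyComp_mul (p : MvPolynomial (Fin 2) ℚ) (g h : Matrix (Fin 2) (Fin 2) ℚ) :
    polyComp p (g * h) = polyComp (polyComp p g) h := by
  rw [polyComp, polyComp, polyComp, comp_aeval_apply]
  refine congrArg (fun f => aeval f p) (funext fun i => ?_)
  simp only [Matrix.mul_apply, Fin.sum_univ_two, map_add, map_mul, aeval_C, aeval_X,
    algebraMap_eq]
  ring

noncomputable def polyCompLine (p : MvPolynomial (Fin 2) ℚ) (A B : Matrix (Fin 2) (Fin 2) ℚ) :
    Polynomial (MvPolynomial (Fin 2) ℚ) :=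
  aeval (fun i => Polynomial.C (C (A i 0) * X 0 + C (A i 1) * X 1)
    + Polynomial.X * Polynomial.C (C (B i 0) * X 0 + C (B i 1) * X 1)) p

lemma eval_polyCompLine (p : MvPolynomial (Fin 2) ℚ) (A B : Matrix (Fin 2) (Fin 2) ℚ) (t : ℚ) :
    (polyCompLine p A B).eval (C t) = polyComp p (A + t • B) := by
  rw [← Polynomial.coe_aeval_eq_eval, ← AlgHom.coe_restrictScalars' ℚ, polyCompLine,
    comp_aeval_apply, polyComp]
  refine congrArg (fun f => aeval f p) (funext fun i => ?_)
  simp only [map_add, map_mul, AlgHom.coe_restrictScalars', Polynomial.coe_aeval_eq_eval,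
    Polynomial.eval_C, Polynomial.eval_X, Matrix.add_apply, Matrix.smul_apply, smul_eq_mul]
  ring

lemma polyComp_add_smul_eq_self_of_forall_intCast {p : MvPolynomial (Fin 2) ℚ}
    {A B : Matrix (Fin 2) (Fin 2) ℚ} (h : ∀ n : ℤ, polyComp p (A + (n : ℚ) • B) = p) (t : ℚ) :
    polyComp p (A + t • B) = p := by
  have hline : polyCompLine p A B - Polynomial.C p = 0 :=
    Polynomial.eq_zero_of_forall_eval_intCast_eq_zero fun n => by
      have hn := eval_polyCompLine p A B n
      rw [map_intCast, h] at hn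
      simp [hn]
  rw [← eval_polyCompLine, ← sub_eq_zero]
  simpa using congrArg (Polynomial.eval (C t)) hline

lemma matQ_transvection {i j : Fin 2} (hij : i ≠ j) (n : ℤ) :
    matQ (Matrix.SpecialLinearGroup.transvection hij n) = 1 + (n : ℚ) • Matrix.single i j 1 := by
  ext a b
  simp [matQ, Matrix.SpecialLinearGroup.transvection_coe, Matrix.single_apply, Matrix.one_apply]

/-- Zariski density of `SL₂(ℤ)` in `SL₂`: a polynomial `p ∈ ℚ[x,y]` invariant under the
substitution action of `SL₂(ℤ)` is invariant under all of `SL₂(ℚ)`. -/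
theorem SL2Z_invariant_implies_SL2Q_invariant
    (p : MvPolynomial (Fin 2) ℚ)
    (hinv : ∀ γ : Matrix.SpecialLinearGroup (Fin 2) ℤ, polyComp p (matQ γ) = p) :
    ∀ g : Matrix.SpecialLinearGroup (Fin 2) ℚ,
      polyComp p (g : Matrix (Fin 2) (Fin 2) ℚ) = p := by
  intro g
  induction g using Matrix.SL2.transvection_induction with
  | htransvec i j hij t =>
    rw [Matrix.SpecialLinearGroup.transvection_coe, ← mul_one t, ← smul_eq_mul,
      ← Matrix.smul_single]
    exact polyComp_add_smul_eq_self_of_forall_intCast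
      (fun n => matQ_transvection hij n ▸ hinv _) t
  | hmul A B hA hB => rw [Matrix.SpecialLinearGroup.coe_mul, polyComp_mul, hA, hB]
end

section
/- Let a, b : ℕ and let f : Forms_a → Forms_b be a ℚ-linear map that is equivariant for the substitution actions of SL₂(ℤ), i.e. f(γ • p) = γ • f(p) for all γ ∈ SL₂(ℤ) and all p ∈ Forms_a. If a ≠ b then f = 0, and if a = b then f is a scalar multiple of the identity. (This encodes that Sym^a ⊗ Sym^b of the standard SL₂(ℤ)-representation has invariants of dimension 1 if a = b and 0 otherwise, which is how representations of SL₂ multiply.) -/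
/-- `Forms_d`: the space of homogeneous polynomials of degree `d` in `ℚ[x,y]`,
realizing `Sym^d` of the standard representation of `SL₂(ℤ)`. -/
noncomputable abbrev Forms (d : ℕ) : Submodule ℚ (MvPolynomial (Fin 2) ℚ) :=
  MvPolynomial.homogeneousSubmodule (Fin 2) ℚ d

open MvPolynomial Finset

lemma eq_zero_of_forall_sum_pow_smul_eq_zero {K M : Type*} [Field K] [AddCommGroup M]
    [Module K M] {s : Set K} (hs : s.Infinite) {N : ℕ} {v : ℕ → M}
    (h : ∀ t ∈ s, ∑ k ∈ range N, t ^ k • v k = 0) {k : ℕ} (hk : k < N) : v k = 0 := by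
  refine (Module.forall_dual_apply_eq_zero_iff K (v k)).mp fun φ => ?_
  set q : Polynomial K := ∑ k ∈ range N, Polynomial.monomial k (φ (v k))
  have hq : q = 0 := by
    refine q.eq_zero_of_infinite_isRoot (hs.mono fun t ht => ?_)
    simpa [q, Polynomial.eval_finsetSum, mul_comm] using congrArg φ (h t ht)
  simpa [q, Polynomial.finsetSum_coeff, Polynomial.coeff_monomial, hk]
    using congrArg (Polynomial.coeff · k) hq

lemma Polynomial.map_coeff_eq_of_forall_map_eval_eq {K A B : Type*} [Field K] [CommRing A]
    [CommRing B] [Algebra K A] [Algebra K B] {s : Set K} (hs : s.Infinite) (g : A →ₗ[K] B)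
    {P : Polynomial A} {Q : Polynomial B}
    (h : ∀ t ∈ s, g (P.eval (algebraMap K A t)) = Q.eval (algebraMap K B t)) (k : ℕ) :
    g (P.coeff k) = Q.coeff k := by
  set N := max (max P.natDegree Q.natDegree) k + 1
  refine sub_eq_zero.mp <| eq_zero_of_forall_sum_pow_smul_eq_zero hs (N := N)
    (v := fun k => g (P.coeff k) - Q.coeff k) (fun t ht => ?_) (by omega)
  have := h t ht
  rw [eval_eq_sum_range' (n := N) (by omega), eval_eq_sum_range' (n := N) (by omega)] at this
  simp_rw [map_sum, ← map_pow, mul_comm _ (algebraMap _ _ _), ← Algebra.smul_def, map_smul] at this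
  simp only [smul_sub, sum_sub_distrib, this, sub_self]

lemma map_pow_apply_of_map_apply {R M M' : Type*} [Semiring R] [AddCommMonoid M] [Module R M]
    [AddCommMonoid M'] [Module R M'] {g : M →ₗ[R] M'} {T : Module.End R M} {T' : Module.End R M'}
    {S : Submodule R M} (hT : ∀ p ∈ S, T p ∈ S) (h : ∀ p ∈ S, g (T p) = T' (g p)) (k : ℕ) :
    ∀ p ∈ S, g ((T ^ k) p) = (T' ^ k) (g p) := by
  induction k with
  | zero => simp
  | succ k ih =>
    intro p hp
    rw [pow_succ, pow_succ, Module.End.mul_apply, Module.End.mul_apply, ih _ (hT p hp), h p hp]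

local notation "ℚ[x,y]" => MvPolynomial (Fin 2) ℚ

noncomputable section

/-- `polyComp p g` is `aeval (rowForm g) p` by definition. -/
def rowForm (g : Matrix (Fin 2) (Fin 2) ℚ) (i : Fin 2) : ℚ[x,y] :=
  C (g i 0) * X 0 + C (g i 1) * X 1

lemma rowForm_one : rowForm 1 = X := by
  ext1 i; fin_cases i <;> simp [rowForm, Matrix.one_apply]

lemma polyComp_one (p : ℚ[x,y]) : polyComp p 1 = p := by
  change aeval (rowForm 1) p = p
  rw [rowForm_one, aeval_X_left_apply]

lemma polyComp_mem_forms {d : ℕ} {p : ℚ[x,y]} (hp : p ∈ Forms d)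
    (g : Matrix (Fin 2) (Fin 2) ℚ) : polyComp p g ∈ Forms d := by
  have := hp.aeval (n := 1) (g := rowForm g)
    fun i => (isHomogeneous_C_mul_X _ _).add (isHomogeneous_C_mul_X _ _)
  rwa [one_mul] at this

section Family

variable (N : Matrix (Fin 2) (Fin 2) ℚ) (p : ℚ[x,y])

def polyCompFamily : ℚ[x,y] →ₐ[ℚ] Polynomial ℚ[x,y] :=
  aeval fun i => Polynomial.C (X i) + Polynomial.X * Polynomial.C (rowForm N i)

lemma eval_polyCompFamily (t : ℚ) :
    (polyCompFamily N p).eval (C t) = polyComp p (1 + t • N) := by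
  have : ((Polynomial.aeval (C t)).restrictScalars ℚ).comp (polyCompFamily N) =
      aeval (rowForm (1 + t • N)) := by
    refine MvPolynomial.algHom_ext fun i => ?_
    fin_cases i <;> simp [polyCompFamily, rowForm] <;> ring
  exact congr($this p)

lemma coeff_zero_polyCompFamily : (polyCompFamily N p).coeff 0 = p := by
  rw [Polynomial.coeff_zero_eq_eval_zero, ← C_0, eval_polyCompFamily, zero_smul, add_zero,
    polyComp_one]

lemma coeff_one_polyCompFamily :
    (polyCompFamily N p).coeff 1 = ∑ i, rowForm N i * pderiv i p := by
  induction p using MvPolynomial.induction_on with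
  | C a => simp [polyCompFamily]
  | add p q hp hq => simp [hp, hq, mul_add, sum_add_distrib]
  | mul_X p j hp =>
    have hX : polyCompFamily N (X j) =
        Polynomial.C (X j) + Polynomial.X * Polynomial.C (rowForm N j) := aeval_X _ _
    rw [map_mul, hX, mul_add, ← mul_assoc, Polynomial.coeff_add, Polynomial.coeff_mul_C,
      Polynomial.coeff_mul_C, Polynomial.coeff_mul_X, hp, coeff_zero_polyCompFamily]
    simp [mul_add, sum_add_distrib, Pi.single_apply, Fin.sum_univ_two]
    ring

lemma map_sum_rowForm_mul_pderiv_of_map_polyComp (g : ℚ[x,y] →ₗ[ℚ] ℚ[x,y])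
    (h : ∀ n : ℤ, g (polyComp p (1 + (n : ℚ) • N)) = polyComp (g p) (1 + (n : ℚ) • N)) :
    g (∑ i, rowForm N i * pderiv i p) = ∑ i, rowForm N i * pderiv i (g p) := by
  rw [← coeff_one_polyCompFamily, ← coeff_one_polyCompFamily]
  refine Polynomial.map_coeff_eq_of_forall_map_eval_eq
    (Set.infinite_range_of_injective Int.cast_injective) g (fun t ⟨n, hn⟩ => ?_) 1
  rw [← hn, algebraMap_eq, eval_polyCompFamily, eval_polyCompFamily]
  exact h n

end Family

def lowerUnipotent (n : ℤ) : Matrix.SpecialLinearGroup (Fin 2) ℤ :=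
  ⟨!![1, 0; n, 1], by simp [Matrix.det_fin_two_of]⟩

lemma matQ_lowerUnipotent (n : ℤ) :
    matQ (lowerUnipotent n) = 1 + (n : ℚ) • !![0, 0; 1, 0] := by
  ext i j; fin_cases i <;> fin_cases j <;> simp [matQ, lowerUnipotent]

lemma matQ_T_zpow (n : ℤ) : matQ (ModularGroup.T ^ n) = 1 + (n : ℚ) • !![0, 1; 0, 0] := by
  ext i j; fin_cases i <;> fin_cases j <;> simp [matQ, ModularGroup.coe_T_zpow]

def xDy : Module.End ℚ ℚ[x,y] := LinearMap.mulLeft ℚ (X 0) ∘ₗ (pderiv 1).toLinearMap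

def yDx : Module.End ℚ ℚ[x,y] := LinearMap.mulLeft ℚ (X 1) ∘ₗ (pderiv 0).toLinearMap

lemma xDy_apply (p : ℚ[x,y]) : xDy p = X 0 * pderiv 1 p := rfl

lemma yDx_apply (p : ℚ[x,y]) : yDx p = X 1 * pderiv 0 p := rfl

lemma map_xDy_of_map_polyComp (g : ℚ[x,y] →ₗ[ℚ] ℚ[x,y]) (p : ℚ[x,y])
    (h : ∀ γ, g (polyComp p (matQ γ)) = polyComp (g p) (matQ γ)) : g (xDy p) = xDy (g p) := by
  simpa [rowForm, xDy_apply] using map_sum_rowForm_mul_pderiv_of_map_polyComp !![0, 0; 1, 0] p g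
    fun n => by simpa [matQ_lowerUnipotent] using h (lowerUnipotent n)

lemma map_yDx_of_map_polyComp (g : ℚ[x,y] →ₗ[ℚ] ℚ[x,y]) (p : ℚ[x,y])
    (h : ∀ γ, g (polyComp p (matQ γ)) = polyComp (g p) (matQ γ)) : g (yDx p) = yDx (g p) := by
  simpa [rowForm, yDx_apply] using map_sum_rowForm_mul_pderiv_of_map_polyComp !![0, 1; 0, 0] p g
    fun n => by simpa [matQ_T_zpow] using h (ModularGroup.T ^ n)

lemma xDy_X_pow_mul (i j : ℕ) :
    xDy (X 0 ^ i * X 1 ^ j) = j • (X 0 ^ (i + 1) * X 1 ^ (j - 1)) := by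
  rcases j with _ | j
  · simp [xDy_apply]
  · simp [xDy_apply, nsmul_eq_mul]
    ring

lemma yDx_X_pow_mul (i j : ℕ) :
    yDx (X 0 ^ i * X 1 ^ j) = i • (X 0 ^ (i - 1) * X 1 ^ (j + 1)) := by
  rcases i with _ | i
  · simp [yDx_apply]
  · simp [yDx_apply, nsmul_eq_mul]
    ring

lemma pow_xDy_X_pow_mul (k i j : ℕ) :
    (xDy ^ k) (X 0 ^ i * X 1 ^ j) = j.descFactorial k • (X 0 ^ (i + k) * X 1 ^ (j - k)) := by
  induction k generalizing i j with
  | zero => simp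
  | succ k ih =>
    rw [pow_succ, Module.End.mul_apply, xDy_X_pow_mul, map_nsmul, ih, smul_smul]
    rcases j with _ | j
    · simp
    · rw [Nat.succ_descFactorial_succ]
      congr 3 <;> omega

lemma pow_yDx_X_pow_mul (k i j : ℕ) :
    (yDx ^ k) (X 0 ^ i * X 1 ^ j) = i.descFactorial k • (X 0 ^ (i - k) * X 1 ^ (j + k)) := by
  induction k generalizing i j with
  | zero => simp
  | succ k ih =>
    rw [pow_succ, Module.End.mul_apply, yDx_X_pow_mul, map_nsmul, ih, smul_smul]
    rcases i with _ | i
    · simp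
    · rw [Nat.succ_descFactorial_succ]
      congr 3 <;> omega

lemma pow_xDy_pow_yDx_X_pow (k d : ℕ) :
    (xDy ^ k) ((yDx ^ k) (X 0 ^ d)) = (d.descFactorial k * k.factorial) • X 0 ^ d := by
  have h := pow_yDx_X_pow_mul k d 0
  rw [pow_zero, mul_one, zero_add] at h
  rw [h, map_nsmul, pow_xDy_X_pow_mul, Nat.descFactorial_self, Nat.sub_self, pow_zero, mul_one,
    smul_smul]
  by_cases hk : k ≤ d
  · simp [Nat.sub_add_cancel hk]
  · simp [Nat.descFactorial_eq_zero_iff_lt.mpr (not_le.mp hk)]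

lemma X_mul_pderiv_mem_forms (i j : Fin 2) {d : ℕ} {p : ℚ[x,y]} (hp : p ∈ Forms d) :
    X i * pderiv j p ∈ Forms d := by
  rcases d with _ | d
  · rw [totalDegree_eq_zero_iff_eq_C.mp ((totalDegree_zero_iff_isHomogeneous (p := p)).mpr hp)]
    simp
  · simpa [add_comm] using (isHomogeneous_X ℚ i).mul (hp.pderiv (i := j))

lemma xDy_mem_forms {d : ℕ} {p : ℚ[x,y]} (hp : p ∈ Forms d) : xDy p ∈ Forms d :=
  X_mul_pderiv_mem_forms 0 1 hp

lemma yDx_mem_forms {d : ℕ} {p : ℚ[x,y]} (hp : p ∈ Forms d) : yDx p ∈ Forms d :=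
  X_mul_pderiv_mem_forms 1 0 hp

lemma eq_smul_X_pow_of_xDy_eq_zero {d : ℕ} {w : ℚ[x,y]} (hw : w ∈ Forms d) (h : xDy w = 0) :
    w = coeff (Finsupp.single 0 d) w • X 0 ^ d := by
  have hw' : pderiv 1 w = 0 := (mul_eq_zero.mp h).resolve_left (X_ne_zero 0)
  ext m
  rw [coeff_smul, coeff_X_pow, smul_eq_mul]
  by_cases hm : Finsupp.single 0 d = m
  · simp [hm]
  rw [if_neg hm, mul_zero]
  by_cases h1 : m 1 = 0
  · refine hw.coeff_eq_zero fun hdeg => hm ?_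
    rw [Finsupp.degree_eq_sum, Fin.sum_univ_two, h1, add_zero] at hdeg
    ext i; fin_cases i <;> simp [hdeg, h1]
  · have := coeff_pderiv (i := 1) w (m - Finsupp.single 1 1)
    rw [hw', coeff_zero, tsub_add_cancel_of_le (Finsupp.single_le_iff.mpr (by omega))] at this
    exact (mul_eq_zero.mp this.symm).resolve_right (by positivity)

lemma forms_le_span_X_pow_mul (d : ℕ) :
    Forms d ≤ Submodule.span ℚ {p | ∃ i j, i + j = d ∧ X 0 ^ i * X 1 ^ j = p} := by
  rw [Forms, homogeneousSubmodule_eq_finsupp_supported, AddMonoidAlgebra.supported_eq_span_single]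
  refine Submodule.span_mono ?_
  rintro _ ⟨m, hm, rfl⟩
  refine ⟨m 0, m 1, by simpa [Finsupp.degree_eq_sum, Fin.sum_univ_two] using hm, ?_⟩
  simp [single_eq_monomial, monomial_eq, Finsupp.prod_fintype, Fin.prod_univ_two]

section Equivariant

variable {a b : ℕ} {g : ℚ[x,y] →ₗ[ℚ] ℚ[x,y]}
  (hE : ∀ p ∈ Forms a, g (xDy p) = xDy (g p)) (hF : ∀ p ∈ Forms a, g (yDx p) = yDx (g p))

include hE in
lemma exists_map_X_pow_eq_smul (hg : g (X 0 ^ a) ∈ Forms b) :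
    ∃ c : ℚ, g (X 0 ^ a) = c • X 0 ^ b := by
  refine ⟨_, eq_smul_X_pow_of_xDy_eq_zero hg ?_⟩
  rw [← hE _ (isHomogeneous_X_pow 0 a), xDy_apply]
  simp

include hE hF in
lemma eq_of_map_X_pow_eq_smul {c : ℚ} (hc : g (X 0 ^ a) = c • X 0 ^ b) (hc0 : c ≠ 0) :
    a = b := by
  have key (k : ℕ) : a.descFactorial k = b.descFactorial k := by
    have hxa : X 0 ^ a ∈ Forms a := isHomogeneous_X_pow 0 a
    have hE' := map_pow_apply_of_map_apply (fun _ => xDy_mem_forms) hE k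
    have hF' := map_pow_apply_of_map_apply (fun _ => yDx_mem_forms) hF k
    have h : (((a.descFactorial k * k.factorial : ℕ) : ℚ) * c) • (X 0 ^ b : ℚ[x,y]) =
        (((b.descFactorial k * k.factorial : ℕ) : ℚ) * c) • X 0 ^ b := by
      calc _ = g ((xDy ^ k) ((yDx ^ k) (X 0 ^ a))) := by
            rw [pow_xDy_pow_yDx_X_pow, map_nsmul, hc, ← Nat.cast_smul_eq_nsmul ℚ, smul_smul]
        _ = (xDy ^ k) ((yDx ^ k) (g (X 0 ^ a))) := by
            rw [hE' _ (Module.End.pow_apply_mem_of_forall_mem k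
              (fun _ => yDx_mem_forms) _ hxa), hF' _ hxa]
        _ = _ := by
            rw [hc, map_smul, map_smul, pow_xDy_pow_yDx_X_pow, ← Nat.cast_smul_eq_nsmul ℚ,
              smul_smul, mul_comm c]
    have h' := mul_right_cancel₀ hc0 (smul_left_injective ℚ (pow_ne_zero b (X_ne_zero 0)) h)
    exact Nat.eq_of_mul_eq_mul_right (Nat.factorial_pos k) (Nat.cast_injective h')
  have h1 := key (a + 1)
  have h2 := key (b + 1)
  rw [Nat.descFactorial_of_lt (lt_add_one a), eq_comm, Nat.descFactorial_eq_zero_iff_lt] at h1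
  rw [Nat.descFactorial_of_lt (lt_add_one b), Nat.descFactorial_eq_zero_iff_lt] at h2
  omega

include hF in
lemma map_eq_smul_of_map_X_pow_eq_smul {c : ℚ} (hc : g (X 0 ^ a) = c • X 0 ^ a) :
    ∀ p ∈ Forms a, g p = c • p := by
  intro p hp
  refine LinearMap.eqOn_span' (f := g) (g := c • LinearMap.id) ?_ (forms_le_span_X_pow_mul a hp)
  rintro _ ⟨i, j, rfl, rfl⟩
  have hy : (yDx ^ j) (X 0 ^ (i + j)) = (i + j).descFactorial j • (X 0 ^ i * X 1 ^ j) := by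
    simpa using pow_yDx_X_pow_mul j (i + j) 0
  have hne : (i + j).descFactorial j ≠ 0 := by
    rw [Ne, Nat.descFactorial_eq_zero_iff_lt]; omega
  refine IsAddTorsionFree.nsmul_right_injective hne ?_
  simp only [LinearMap.smul_apply, LinearMap.id_apply]
  rw [← map_nsmul, ← hy, map_pow_apply_of_map_apply (fun _ => yDx_mem_forms) hF j _
    (isHomogeneous_X_pow 0 _), hc, map_smul, hy, smul_comm]

end Equivariant

/-- Extending `f` to all of `ℚ[x,y]` lets it act on the coefficients of `polyCompFamily N p`
without knowing that they are forms. -/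
def homogeneousExtension {a b : ℕ} (f : Forms a →ₗ[ℚ] Forms b) : ℚ[x,y] →ₗ[ℚ] ℚ[x,y] :=
  (Forms b).subtype ∘ₗ f ∘ₗ (homogeneousComponent a).codRestrict (Forms a) fun _ =>
    homogeneousComponent_mem a _

lemma homogeneousExtension_apply {a b : ℕ} (f : Forms a →ₗ[ℚ] Forms b) {p : ℚ[x,y]}
    (hp : p ∈ Forms a) : homogeneousExtension f p = f ⟨p, hp⟩ := by
  have : (homogeneousComponent a).codRestrict (Forms a) (fun _ => homogeneousComponent_mem a _) p =
      ⟨p, hp⟩ :=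
    Subtype.ext (by simp [homogeneousComponent_of_mem hp])
  simp [homogeneousExtension, this]

lemma homogeneousExtension_mem {a b : ℕ} (f : Forms a →ₗ[ℚ] Forms b) (p : ℚ[x,y]) :
    homogeneousExtension f p ∈ Forms b :=
  (f _).2

end

/-- A `ℚ`-linear map `Forms_a → Forms_b` which is equivariant for the substitution actions
`γ • p = p ∘ γ⁻¹` of `SL₂(ℤ)` is zero if `a ≠ b`, and a scalar multiple of the identity if
`a = b`: the invariants of `Sym^a ⊗ Sym^b` have dimension `1` if `a = b` and `0` otherwise. -/
theorem equivariant_map_between_symmetric_powers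
    (a b : ℕ) (f : Forms a →ₗ[ℚ] Forms b)
    (hf : ∀ γ : Matrix.SpecialLinearGroup (Fin 2) ℤ, ∀ p : Forms a,
      ∀ h : polyComp (p : MvPolynomial (Fin 2) ℚ) (matQ γ⁻¹) ∈ Forms a,
        (f ⟨polyComp (p : MvPolynomial (Fin 2) ℚ) (matQ γ⁻¹), h⟩ : MvPolynomial (Fin 2) ℚ)
          = polyComp (f p : MvPolynomial (Fin 2) ℚ) (matQ γ⁻¹)) :
    (a ≠ b → f = 0) ∧
    (a = b → ∃ c : ℚ, ∀ p : Forms a,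
      (f p : MvPolynomial (Fin 2) ℚ) = c • (p : MvPolynomial (Fin 2) ℚ)) := by
  set g := homogeneousExtension f
  have hg (p : ℚ[x,y]) (hp : p ∈ Forms a) (γ : Matrix.SpecialLinearGroup (Fin 2) ℤ) :
      g (polyComp p (matQ γ)) = polyComp (g p) (matQ γ) := by
    simpa [g, homogeneousExtension_apply, hp, polyComp_mem_forms hp] using
      hf γ⁻¹ ⟨p, hp⟩ (by simpa using polyComp_mem_forms hp _)
  have hE p (hp : p ∈ Forms a) := map_xDy_of_map_polyComp g p (hg p hp)
  have hF p (hp : p ∈ Forms a) := map_yDx_of_map_polyComp g p (hg p hp)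
  obtain ⟨c, hc⟩ := exists_map_X_pow_eq_smul hE (homogeneousExtension_mem f _)
  have hscalar (h : a = b ∨ c = 0) (p : Forms a) : (f p : ℚ[x,y]) = c • (p : ℚ[x,y]) := by
    rw [← homogeneousExtension_apply f p.2]
    refine map_eq_smul_of_map_X_pow_eq_smul hF ?_ p p.2
    rcases h with rfl | rfl
    exacts [hc, by simpa using hc]
  refine ⟨fun hab => ?_, fun hab => ⟨c, hscalar (.inl hab)⟩⟩
  have hc0 : c = 0 := by_contra fun hc0 => hab (eq_of_map_X_pow_eq_smul hE hF hc hc0)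
  ext1 p
  simpa [hc0] using hscalar (.inr hc0) p
end

section
/- Let p ≥ 2, let W be a ℚ-vector space, and let ρ be a representation of the symmetric group S_p = Equiv.Perm (Fin p) on W such that the only vector w ∈ W with ρ(τ) w = w for the transposition τ = Equiv.swap 0 1 is w = 0. Then ρ is a multiple of the sign representation: for every σ ∈ S_p, ρ(σ) = (sign σ) • id_W. (This is the step in the proof of Proposition 3.3: the only representation of S_p containing no copy of the trivial representation when restricted to an S_2 is the alternating one.) -/
/-!
If `τ = (0 1)` fixes no nonzero vector, then `ρ τ = -1`, because `w + ρ τ w` is always fixed.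
All transpositions are conjugate to `τ` and `-1` is central, so every transposition acts by `-1`;
as transpositions generate `S_p`, `ρ` agrees with the sign character times the identity.
-/

open Equiv Equiv.Perm

namespace Representation

variable {k G V : Type*} [CommRing k] [AddCommGroup V] [Module k V]

lemma eq_neg_one_of_mul_self_eq_one [Monoid G] (ρ : Representation k G V) {g : G}
    (hg : g * g = 1) (hfix : ∀ w, ρ g w = w → w = 0) : ρ g = -1 := by
  ext w
  have hinv : ρ g (ρ g w) = w := by
    rw [← Module.End.mul_apply, ← map_mul, hg, map_one, Module.End.one_apply]
  have hsum : ρ g (w + ρ g w) = w + ρ g w := by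
    rw [map_add, hinv, add_comm]
  simpa [eq_neg_iff_add_eq_zero, add_comm] using hfix _ hsum

lemma eq_neg_one_of_isConj [Group G] (ρ : Representation k G V) {g h : G}
    (hgh : IsConj g h) (hg : ρ g = -1) : ρ h = -1 := by
  obtain ⟨c, rfl⟩ := isConj_iff.mp hgh
  rw [map_mul, map_mul, hg, mul_neg_one, neg_mul, ← map_mul, mul_inv_cancel, map_one]

lemma eq_sign_smul_id_of_swap_eq_neg_one {α : Type*} [DecidableEq α] [Fintype α]
    (ρ : Representation k (Perm α) V) (hswap : ∀ x y : α, x ≠ y → ρ (swap x y) = -1)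
    (σ : Perm α) : ρ σ = ((sign σ : ℤ) : k) • (LinearMap.id : V →ₗ[k] V) := by
  induction σ using swap_induction_on with
  | one => simp [Module.End.one_eq_id]
  | swap_mul f x y hxy ih =>
    rw [map_mul, hswap x y hxy, ih, Perm.sign_mul, sign_swap hxy]
    ext w
    simp

end Representation

/-- A representation of the symmetric group `S_p` (`p ≥ 2`) on a `ℚ`-vector space in which
the only vector fixed by the transposition `(0 1)` is zero is a multiple of the sign
representation. -/
theorem rep_with_no_transposition_invariants_is_sign
    (p : ℕ) (hp : 2 ≤ p) (W : Type*) [AddCommGroup W] [Module ℚ W]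
    (ρ : Representation ℚ (Equiv.Perm (Fin p)) W)
    (h : ∀ w : W, ρ (Equiv.swap ⟨0, by omega⟩ ⟨1, by omega⟩) w = w → w = 0) :
    ∀ σ : Equiv.Perm (Fin p),
      ρ σ = ((Equiv.Perm.sign σ : ℤ) : ℚ) • (LinearMap.id : W →ₗ[ℚ] W) := by
  have h01 : (⟨0, by omega⟩ : Fin p) ≠ ⟨1, by omega⟩ := by simp
  have hτ : ρ (swap ⟨0, by omega⟩ ⟨1, by omega⟩) = -1 :=
    ρ.eq_neg_one_of_mul_self_eq_one (swap_mul_self _ _) h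
  exact ρ.eq_sign_smul_id_of_swap_eq_neg_one fun x y hxy =>
    ρ.eq_neg_one_of_isConj (isConj_swap h01 hxy) hτ
end

section
/- Let k ≥ 2, let A be the Young diagram (3,2^{k-1},1) and B the Young diagram (4,2^{k-1}) (both of size 2k+2), and let T be any nonempty multiset contained in {A, B} (so T is {A}, {B}, or {A,B}). Then there is no multiset M of Young diagrams, each of size 2k+3, such that the multiset sum over μ ∈ M of the corner-removal multisets of μ equals T. (This is the 'easy combinatorial check with the branching formula' in the proof of Proposition 3.4: for k ≥ 2, neither V_{3,2^{k-1},1}, nor V_{4,2^{k-1}}, nor their sum is the restriction to S_{2k+2} of a representation of S_{2k+3}.) -/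
/-!
A diagram `μ` contributing to a realization of `T` has a corner whose removal is `A` or `B`,
so `μ` is `A` or `B` with one cell added, and all its corner removals must again be `A` or `B`.
Running through the seven such `μ`, each has a removable corner whose removal is neither.
Everything is phrased via row lengths: removing the corner in row `r` subtracts `Pi.single r 1`.
-/

open Classical in
/-- The corner-removal multiset of a Young diagram `μ`: the multiset of Young diagrams
obtained from `μ` by deleting one removable corner, with one entry for each removable
corner of `μ`. -/
noncomputable def cornerRemovals (μ : YoungDiagram) : Multiset YoungDiagram :=
  (μ.cells.val.filter (fun c => ∃ ν : YoungDiagram, ν.cells = μ.cells.erase c)).map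
    (fun c =>
      if h : ∃ ν : YoungDiagram, ν.cells = μ.cells.erase c then h.choose else ⊥)

theorem Multiset.bind_ne_of_forall_exists_notMem {α β : Type*} {f : α → Multiset β} {S : Set β}
    (hf : ∀ a, ∀ b ∈ f a, b ∈ S → ∃ b' ∈ f a, b' ∉ S)
    {T : Multiset β} (hT : T ≠ 0) (hTS : ∀ b ∈ T, b ∈ S) (M : Multiset α) :
    M.bind f ≠ T := by
  intro hM
  obtain ⟨b, hb⟩ := Multiset.exists_mem_of_ne_zero hT
  obtain ⟨a, ha, hba⟩ := Multiset.mem_bind.1 (hM ▸ hb)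
  obtain ⟨b', hb', hb'S⟩ := hf a b hba (hTS b hb)
  exact hb'S (hTS b' (hM ▸ Multiset.mem_bind.2 ⟨a, ha, hb'⟩))

namespace YoungDiagram

theorem rowLen_eq_getD_rowLens (μ : YoungDiagram) (i : ℕ) :
    μ.rowLen i = μ.rowLens.getD i 0 := by
  rcases lt_or_ge i μ.rowLens.length with h | h
  · rw [List.getD_eq_getElem _ _ h, get_rowLens]
  · rw [List.getD_eq_default _ _ h]
    rw [length_rowLens] at h
    by_contra hne
    have : (i, 0) ∈ μ := mem_iff_lt_rowLen.2 (Nat.pos_of_ne_zero hne)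
    rw [mem_iff_lt_colLen] at this
    omega

theorem rowLen_eq_of_forall_mem_iff {μ : YoungDiagram} {i n : ℕ} (h : ∀ j, (i, j) ∈ μ ↔ j < n) :
    μ.rowLen i = n :=
  eq_of_forall_lt_iff fun j => mem_iff_lt_rowLen.symm.trans (h j)

open Classical in
theorem mem_cornerRemovals_iff {μ ν : YoungDiagram} :
    ν ∈ cornerRemovals μ ↔ ∃ c ∈ μ, ν.cells = μ.cells.erase c := by
  simp only [cornerRemovals, Multiset.mem_map, Multiset.mem_filter, Finset.mem_val, mem_cells]
  constructor
  · rintro ⟨c, ⟨hc, hex⟩, rfl⟩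
    exact ⟨c, hc, by rw [dif_pos hex]; exact hex.choose_spec⟩
  · rintro ⟨c, hc, hν⟩
    have hex : ∃ ν' : YoungDiagram, ν'.cells = μ.cells.erase c := ⟨ν, hν⟩
    refine ⟨c, ⟨hc, hex⟩, ?_⟩
    rw [dif_pos hex]
    exact YoungDiagram.ext (hex.choose_spec.trans hν.symm)

theorem rowLen_eq_add_single_of_cells_eq_erase {μ ν : YoungDiagram} {r s : ℕ} (hc : (r, s) ∈ μ)
    (hν : ν.cells = μ.cells.erase (r, s)) : μ.rowLen = ν.rowLen + Pi.single r 1 := by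
  have hmem : ∀ i j, (i, j) ∈ ν ↔ (i, j) ≠ (r, s) ∧ (i, j) ∈ μ := fun i j => by
    rw [← mem_cells, hν, Finset.mem_erase, mem_cells]
  have hs : μ.rowLen r = s + 1 := by
    refine le_antisymm ?_ (mem_iff_lt_rowLen.1 hc)
    by_contra! hlt
    have hsucc : (r, s + 1) ∈ ν := (hmem r (s + 1)).2 ⟨by simp, mem_iff_lt_rowLen.2 hlt⟩
    exact ((hmem r s).1 (ν.up_left_mem le_rfl s.le_succ hsucc)).1 rfl
  funext i
  rw [Pi.add_apply, Pi.single_apply]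
  split_ifs with hi
  · subst hi
    rw [hs, rowLen_eq_of_forall_mem_iff (n := s) fun j => ?_]
    rw [hmem, mem_iff_lt_rowLen, hs]
    simp only [ne_eq, Prod.mk.injEq, true_and]
    omega
  · rw [add_zero]
    exact (rowLen_eq_of_forall_mem_iff fun j => by rw [hmem, mem_iff_lt_rowLen]; simp [hi]).symm

theorem exists_rowLen_eq_add_single_of_mem_cornerRemovals {μ ν : YoungDiagram}
    (h : ν ∈ cornerRemovals μ) : ∃ r, μ.rowLen = ν.rowLen + Pi.single r 1 := by
  obtain ⟨⟨r, s⟩, hc, hν⟩ := mem_cornerRemovals_iff.1 h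
  exact ⟨r, rowLen_eq_add_single_of_cells_eq_erase hc hν⟩

theorem isLowerSet_erase_of_rowLen_lt {μ : YoungDiagram} {r : ℕ}
    (hr : μ.rowLen (r + 1) < μ.rowLen r) :
    IsLowerSet (↑(μ.cells.erase (r, μ.rowLen r - 1)) : Set (ℕ × ℕ)) := by
  rintro ⟨i', j'⟩ ⟨i, j⟩ hle hmem
  simp only [Finset.coe_erase, Set.mem_sdiff, Finset.mem_coe, mem_cells,
    Set.mem_singleton_iff] at hmem ⊢
  refine ⟨μ.isLowerSet hle hmem.1, ?_⟩
  rintro ⟨⟩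
  obtain ⟨hi : r ≤ i', hj : μ.rowLen r - 1 ≤ j'⟩ := hle
  have hj' := mem_iff_lt_rowLen.1 hmem.1
  rcases hi.eq_or_lt with rfl | hi
  · exact hmem.2 (by rw [Prod.mk.injEq]; omega)
  · have := μ.rowLen_anti (r + 1) i' hi
    omega

theorem exists_mem_cornerRemovals_rowLen_eq_add_single {μ : YoungDiagram} {r : ℕ}
    (hr : μ.rowLen (r + 1) < μ.rowLen r) :
    ∃ ν ∈ cornerRemovals μ, μ.rowLen = ν.rowLen + Pi.single r 1 := by
  let ν : YoungDiagram := ⟨_, isLowerSet_erase_of_rowLen_lt hr⟩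
  have hc : (r, μ.rowLen r - 1) ∈ μ := mem_iff_lt_rowLen.2 (by omega)
  exact ⟨ν, mem_cornerRemovals_iff.2 ⟨_, hc, rfl⟩, rowLen_eq_add_single_of_cells_eq_erase hc rfl⟩

end YoungDiagram

def rowLenA (k i : ℕ) : ℕ := if i = 0 then 3 else if i < k then 2 else if i = k then 1 else 0

def rowLenB (k i : ℕ) : ℕ := if i = 0 then 4 else if i < k then 2 else 0

theorem exists_removable_row_ne_rowLenA_rowLenB {k : ℕ} (hk : 2 ≤ k) {f : ℕ → ℕ} (hf : Antitone f)
    {r : ℕ} (hr : f = rowLenA k + Pi.single r 1 ∨ f = rowLenB k + Pi.single r 1) :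
    ∃ s, f (s + 1) < f s ∧ f ≠ rowLenA k + Pi.single s 1 ∧ f ≠ rowLenB k + Pi.single s 1 := by
  have hstep := hf (Nat.sub_le r 1)
  rcases hr with rfl | rfl
  · -- `f` is `(4,2^{k-1},1)`, `(3,3,2^{k-2},1)`, `(3,2^k)` or `(3,2^{k-1},1,1)`
    obtain hr | hr | hr | hr : r = 0 ∨ r = 1 ∨ r = k ∨ r = k + 1 := by
      simp only [Pi.add_apply, Pi.single_apply, rowLenA] at hstep
      grind
    · refine ⟨k - 1, ?_, Function.ne_iff.2 ⟨0, ?_⟩, Function.ne_iff.2 ⟨k, ?_⟩⟩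
      all_goals simp only [Pi.add_apply, Pi.single_apply, rowLenA, rowLenB]; grind
    · refine ⟨k, ?_, Function.ne_iff.2 ⟨1, ?_⟩, Function.ne_iff.2 ⟨1, ?_⟩⟩
      all_goals simp only [Pi.add_apply, Pi.single_apply, rowLenA, rowLenB]; grind
    · refine ⟨0, ?_, Function.ne_iff.2 ⟨0, ?_⟩, Function.ne_iff.2 ⟨0, ?_⟩⟩
      all_goals simp only [Pi.add_apply, Pi.single_apply, rowLenA, rowLenB]; grind
    · refine ⟨0, ?_, Function.ne_iff.2 ⟨0, ?_⟩, Function.ne_iff.2 ⟨0, ?_⟩⟩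
      all_goals simp only [Pi.add_apply, Pi.single_apply, rowLenA, rowLenB]; grind
  · -- `f` is `(5,2^{k-1})`, `(4,3,2^{k-2})` or `(4,2^{k-1},1)`
    obtain hr | hr | hr : r = 0 ∨ r = 1 ∨ r = k := by
      simp only [Pi.add_apply, Pi.single_apply, rowLenB] at hstep
      grind
    · refine ⟨k - 1, ?_, Function.ne_iff.2 ⟨0, ?_⟩, Function.ne_iff.2 ⟨0, ?_⟩⟩
      all_goals simp only [Pi.add_apply, Pi.single_apply, rowLenA, rowLenB]; grind
    · refine ⟨0, ?_, Function.ne_iff.2 ⟨1, ?_⟩, Function.ne_iff.2 ⟨1, ?_⟩⟩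
      all_goals simp only [Pi.add_apply, Pi.single_apply, rowLenA, rowLenB]; grind
    · refine ⟨k - 1, ?_, Function.ne_iff.2 ⟨0, ?_⟩, Function.ne_iff.2 ⟨k, ?_⟩⟩
      all_goals simp only [Pi.add_apply, Pi.single_apply, rowLenA, rowLenB]; grind

theorem rowLen_eq_rowLenA {k : ℕ} (hk : 1 ≤ k) {A : YoungDiagram}
    (hA : A.rowLens = 3 :: (List.replicate (k - 1) 2 ++ [1])) :
    A.rowLen = rowLenA k := by
  funext i
  rw [YoungDiagram.rowLen_eq_getD_rowLens, hA, List.getD_eq_getElem?_getD, rowLenA]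
  rcases i with _ | i
  · simp
  · simp only [List.getElem?_cons_succ, List.getElem?_append, List.getElem?_replicate,
      List.length_replicate]
    grind

theorem rowLen_eq_rowLenB {k : ℕ} {B : YoungDiagram}
    (hB : B.rowLens = 4 :: List.replicate (k - 1) 2) :
    B.rowLen = rowLenB k := by
  funext i
  rw [YoungDiagram.rowLen_eq_getD_rowLens, hB, List.getD_eq_getElem?_getD, rowLenB]
  rcases i with _ | i
  · simp
  · simp only [List.getElem?_cons_succ, List.getElem?_replicate]
    grind

theorem exists_mem_cornerRemovals_ne_of_mem_cornerRemovals {k : ℕ} (hk : 2 ≤ k)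
    {A B : YoungDiagram}
    (hA : A.rowLens = 3 :: (List.replicate (k - 1) 2 ++ [1]))
    (hB : B.rowLens = 4 :: List.replicate (k - 1) 2) {μ ν : YoungDiagram}
    (hν : ν ∈ cornerRemovals μ) (hνAB : ν = A ∨ ν = B) :
    ∃ ν' ∈ cornerRemovals μ, ν' ≠ A ∧ ν' ≠ B := by
  have hA' := rowLen_eq_rowLenA (by omega) hA
  have hB' := rowLen_eq_rowLenB hB
  obtain ⟨r, hr⟩ := YoungDiagram.exists_rowLen_eq_add_single_of_mem_cornerRemovals hν
  have hμ : μ.rowLen = rowLenA k + Pi.single r 1 ∨ μ.rowLen = rowLenB k + Pi.single r 1 := by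
    rcases hνAB with rfl | rfl
    exacts [.inl (hA' ▸ hr), .inr (hB' ▸ hr)]
  obtain ⟨s, hs, hsA, hsB⟩ :=
    exists_removable_row_ne_rowLenA_rowLenB hk (fun _ _ h => μ.rowLen_anti _ _ h) hμ
  obtain ⟨ν', hν', hμν'⟩ := YoungDiagram.exists_mem_cornerRemovals_rowLen_eq_add_single hs
  refine ⟨ν', hν', ?_, ?_⟩ <;> rintro rfl
  · exact hsA (hμν'.trans (by rw [hA']))
  · exact hsB (hμν'.trans (by rw [hB']))

/-- For `k ≥ 2`, with `A = (3, 2^{k-1}, 1)` and `B = (4, 2^{k-1})` (partitions of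
`2k + 2`), no nonempty submultiset `T` of `{A, B}` is the multiset sum of the
corner-removal multisets of a multiset of partitions of `2k + 3`: by the branching rule,
neither `V_A`, nor `V_B`, nor their sum is the restriction to `S_{2k+2}` of a
representation of `S_{2k+3}`. -/
theorem no_branching_realization
    (k : ℕ) (hk : 2 ≤ k) (A B : YoungDiagram)
    (hA : A.rowLens = 3 :: (List.replicate (k - 1) 2 ++ [1]))
    (hB : B.rowLens = 4 :: List.replicate (k - 1) 2)
    (T : Multiset YoungDiagram) (hT : T ≠ 0) (hTAB : T ≤ ({A, B} : Multiset YoungDiagram)) :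
    ¬ ∃ M : Multiset YoungDiagram,
        (∀ μ ∈ M, μ.card = 2 * k + 3) ∧ M.bind cornerRemovals = T := by
  rintro ⟨M, -, hM⟩
  refine Multiset.bind_ne_of_forall_exists_notMem (S := {A, B}) (fun μ ν hν hνAB => ?_) hT
    (fun ν hν => by simpa using Multiset.mem_of_le hTAB hν) M hM
  obtain ⟨ν', hν', hν'A, hν'B⟩ :=
    exists_mem_cornerRemovals_ne_of_mem_cornerRemovals hk hA hB hν hνAB
  exact ⟨ν', hν', by simp [hν'A, hν'B]⟩
end

section
/- Let G be a topological additive commutative group and n : ℕ. The map Conf(G, n+1) → G × Conf°(G, n) sending x to (x 0, fun i => x (i.succ) − x 0) is a homeomorphism. (This makes precise the isomorphism F(E, n+1)/E ≅ F(E ∖ {0}, n) used in the paper: the configuration space of n+1 points on a group, modulo translation, is the configuration space of n points avoiding the origin.) -/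
/-- The ordered configuration space of `m` points in a topological space `G`, with the
subspace topology from the product `Fin m → G`. -/
abbrev Conf (G : Type*) [TopologicalSpace G] (m : ℕ) : Type _ :=
  {x : Fin m → G // Function.Injective x}

/-- The ordered configuration space of `m` points in a topological additive group `G`
avoiding the origin, with the subspace topology. -/
abbrev Conf0 (G : Type*) [TopologicalSpace G] [AddCommGroup G] (m : ℕ) : Type _ :=
  {y : Fin m → G // Function.Injective y ∧ ∀ i, y i ≠ 0}

/-!
Subtracting `x 0` from the remaining coordinates is a homeomorphism
`(Fin (n + 1) → G) ≃ₜ G × (Fin n → G)`, and the points `x i` are pairwise distinct exactly when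
the differences `x i.succ - x 0` are pairwise distinct and nonzero, so it restricts to
`Conf G (n + 1) ≃ₜ G × Conf0 G n`.
-/

open Function

theorem Fin.injective_iff_injective_succ_sub_zero {G : Type*} [AddGroup G] {n : ℕ}
    {x : Fin (n + 1) → G} :
    Injective x ↔
      Injective (fun i : Fin n => x i.succ - x 0) ∧ ∀ i : Fin n, x i.succ - x 0 ≠ 0 := by
  rw [← Fin.cons_self_tail x, Fin.cons_injective_iff]
  simp only [Fin.cons_zero, Fin.cons_succ, sub_ne_zero, Set.mem_range, not_exists]
  exact ⟨fun h => ⟨fun i j hij => h.2 (sub_left_injective hij), fun i => (h.1 i ·)⟩,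
    fun h => ⟨fun i hi => h.2 i hi, fun i j hij => h.1 (by simp [hij])⟩⟩

namespace Homeomorph

def prodSubtypeSndEquivSubtypeProd {X Y : Type*} [TopologicalSpace X] [TopologicalSpace Y]
    {p : Y → Prop} : {z : X × Y // p z.2} ≃ₜ X × {y // p y} where
  toFun z := (z.1.1, ⟨z.1.2, z.2⟩)
  invFun z := ⟨(z.1, z.2.1), z.2.2⟩
  continuous_toFun := by fun_prop
  continuous_invFun := by fun_prop

def piFinSuccSubZero {G : Type*} [AddGroup G] [TopologicalSpace G] [ContinuousAdd G]
    [ContinuousSub G] {n : ℕ} : (Fin (n + 1) → G) ≃ₜ G × (Fin n → G) where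
  toFun x := (x 0, fun i => x i.succ - x 0)
  invFun p := Fin.cons p.1 (fun i => p.2 i + p.1)
  left_inv x := by ext i; cases i using Fin.cases <;> simp
  right_inv p := by ext <;> simp
  continuous_toFun := by fun_prop
  continuous_invFun := by fun_prop

end Homeomorph

/-- For a topological additive commutative group `G`, the map
`x ↦ (x 0, fun i => x i.succ - x 0)` is a homeomorphism
`Conf(G, n+1) ≃ G × Conf°(G, n)`. -/
theorem conf_succ_homeomorph_prod
    (G : Type*) [AddCommGroup G] [TopologicalSpace G] [IsTopologicalAddGroup G] (n : ℕ) :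
    ∃ h : Conf G (n + 1) ≃ₜ G × Conf0 G n,
      ∀ x : Conf G (n + 1),
        (h x).1 = x.1 0 ∧ ((h x).2 : Fin n → G) = fun i => x.1 i.succ - x.1 0 :=
  ⟨(Homeomorph.piFinSuccSubZero.subtype fun _ => Fin.injective_iff_injective_succ_sub_zero).trans
      Homeomorph.prodSubtypeSndEquivSubtypeProd,
    fun _ => ⟨rfl, rfl⟩⟩
end

section
/- Let G be a topological additive commutative group and n : ℕ, and let G act on Conf(G, n+1) by translation: g +ᵥ x = fun i => g + x i. Then the orbit space of this action (the quotient of Conf(G, n+1) by the orbit equivalence relation, with the quotient topology) is homeomorphic to Conf°(G, n). (For G an elliptic curve E this is the isomorphism F(E, n+1)/E ≅ F(E ∖ {0}, n) used throughout the paper.) -/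
/-- `G` acts on `Conf(G, m)` by translation: `g +ᵥ x = fun i => g + x i`. -/
instance confAddAction (G : Type*) [AddCommGroup G] [TopologicalSpace G] (m : ℕ) :
    AddAction G (Conf G m) where
  vadd g x := ⟨fun i => g + x.1 i, fun _ _ h => x.2 (add_left_cancel h)⟩
  zero_vadd _ := Subtype.ext (funext fun _ => zero_add _)
  add_vadd a b x := Subtype.ext (funext fun i => add_assoc a b (x.1 i))

/-! The translation orbits in `Conf(G, n+1)` are exactly the fibres of the continuous map
`x ↦ (x 1 - x 0, …, x n - x 0)` onto `Conf°(G, n)`, and `y ↦ (0, y 0, …, y (n-1))` is a continuous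
section of it; a quotient by the fibres of a map with a continuous section is homeomorphic to
its codomain. -/

namespace Conf

variable {G : Type*} [TopologicalSpace G] [AddCommGroup G] {n : ℕ}

def normalize [ContinuousSub G] : C(Conf G (n + 1), Conf0 G n) where
  toFun x := ⟨fun i => x.1 i.succ - x.1 0,
    (sub_left_injective).comp (x.2.comp (Fin.succ_injective n)),
    fun i => sub_ne_zero.2 (x.2.ne (Fin.succ_ne_zero i))⟩
  continuous_toFun := by
    refine Continuous.subtype_mk (continuous_pi fun i => ?_) _
    exact ((continuous_apply i.succ).comp continuous_subtype_val).sub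
      ((continuous_apply 0).comp continuous_subtype_val)

def consZero : C(Conf0 G n, Conf G (n + 1)) where
  toFun y := ⟨Fin.cons 0 y.1, Fin.cons_injective_iff.2 ⟨fun ⟨i, hi⟩ => y.2.2 i hi, y.2.1⟩⟩
  continuous_toFun := by
    apply Continuous.subtype_mk
    exact continuous_const.finCons continuous_subtype_val

theorem normalize_consZero [ContinuousSub G] :
    Function.RightInverse (consZero (G := G) (n := n)) normalize := by
  intro y
  ext i
  simp [normalize, consZero]

theorem normalize_vadd [ContinuousSub G] (g : G) (x : Conf G (n + 1)) :
    normalize (g +ᵥ x) = normalize x := by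
  ext i
  show g + x.1 i.succ - (g + x.1 0) = x.1 i.succ - x.1 0
  abel

theorem vadd_consZero_normalize [ContinuousSub G] (x : Conf G (n + 1)) :
    x.1 0 +ᵥ consZero (normalize x) = x := by
  ext i
  show x.1 0 + (Fin.cons (0 : G) (fun j => x.1 j.succ - x.1 0) : Fin (n + 1) → G) i = x.1 i
  induction i using Fin.cases with
  | zero => simp
  | succ i => simp

theorem orbitRel_eq_ker_normalize [ContinuousSub G] :
    AddAction.orbitRel G (Conf G (n + 1)) = Setoid.ker (normalize (G := G) (n := n)) := by
  ext x y
  rw [AddAction.orbitRel_apply, Setoid.ker_def]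
  constructor
  · rintro ⟨g, rfl⟩
    exact normalize_vadd g y
  · intro h
    refine ⟨x.1 0 - y.1 0, ?_⟩
    calc (x.1 0 - y.1 0) +ᵥ y = (x.1 0 - y.1 0) +ᵥ (y.1 0 +ᵥ consZero (normalize y)) :=
          congrArg _ (vadd_consZero_normalize y).symm
      _ = x.1 0 +ᵥ consZero (normalize x) := by rw [vadd_vadd, sub_add_cancel, h]
      _ = x := vadd_consZero_normalize x

end Conf

/-- The orbit space of the translation action of `G` on `Conf(G, n+1)`, with the quotient
topology, is homeomorphic to `Conf°(G, n)`: for an elliptic curve `E` this is the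
isomorphism `F(E, n+1)/E ≅ F(E ∖ {0}, n)`. -/
theorem conf_quotient_translation_homeomorph
    (G : Type*) [AddCommGroup G] [TopologicalSpace G] [IsTopologicalAddGroup G] (n : ℕ) :
    Nonempty
      (Quotient (AddAction.orbitRel G (Conf G (n + 1))) ≃ₜ Conf0 G n) := by
  rw [Conf.orbitRel_eq_ker_normalize]
  exact ⟨Conf.normalize_consZero.homeomorph⟩
end
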